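/- For any integers n, r ≥ 2, there exists a 2-connected multigraph G with |V(G)| = 2n and Δ(G) = r such that G admits an interval (1 + n(r−1))-coloring, and moreover W(G) = 1 + n(r−1), i.e., no interval coloring of G uses more colors. -/

import Mathlib

/-- A finite loopless multigraph: an edge-indexed family of unordered pairs of
vertices, none of which is a loop. -/
structure Multigraph (V E : Type*) where
  /-- the endpoints of an edge -/
  ends : E → Sym2 V
  loopless : ∀ e, ¬ (ends e).IsDiag

namespace Multigraph

variable {V E : Type*} (G : Multigraph V E)

/-- `v` is an endpoint of `e`. -/
def Inc (v : V) (e : E) : Prop := v ∈ G.ends e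

/-- The degree of a vertex: the number of edges incident to it. -/
noncomputable def degree (v : V) : ℕ := Nat.card {e : E // G.Inc v e}

/-- The maximum degree `Δ(G)`. -/
noncomputable def maxDegree : ℕ := sSup (Set.range G.degree)

/-- Two vertices are adjacent if some edge joins them. -/
def Adj (a b : V) : Prop := ∃ e, G.ends e = s(a, b)

/-- `G` is connected. -/
def Connected : Prop := Nonempty V ∧ ∀ u w : V, Relation.ReflTransGen G.Adj u w

/-- `G` is 2-connected: it is connected and removing any single vertex leaves it
connected (any two vertices distinct from `v` are joined by a walk avoiding `v`). -/
def TwoConnected : Prop :=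
  G.Connected ∧ ∀ v u w : V, u ≠ v → w ≠ v →
    Relation.ReflTransGen (fun a b => G.Adj a b ∧ a ≠ v ∧ b ≠ v) u w

/-- An interval `t`-coloring of the multigraph `G`: a proper edge coloring with
colors `1,…,t`, each color used at least once, such that the colors on the edges
incident to every vertex form an interval of consecutive integers. -/
def IsIntervalColoring (t : ℕ) (c : E → ℕ) : Prop :=
  (∀ e₁ e₂ : E, e₁ ≠ e₂ → (∃ v, G.Inc v e₁ ∧ G.Inc v e₂) → c e₁ ≠ c e₂) ∧
  (∀ e, c e ∈ Set.Icc 1 t) ∧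
  (∀ i ∈ Set.Icc 1 t, ∃ e, c e = i) ∧
  (∀ (v : V) (i j k : ℕ), (∃ e, G.Inc v e ∧ c e = i) → (∃ e, G.Inc v e ∧ c e = j) →
    i ≤ k → k ≤ j → ∃ e, G.Inc v e ∧ c e = k)

/-- `G` has a cycle of length `n`: `n ≥ 2` distinct vertices and `n` distinct edges
arranged cyclically. -/
def HasCycleOfLength (n : ℕ) : Prop :=
  2 ≤ n ∧ ∃ (f : ZMod n → V) (g : ZMod n → E),
    Function.Injective f ∧ Function.Injective g ∧
    ∀ i : ZMod n, G.ends (g i) = s(f i, f (i + 1))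

end Multigraph

/-!
Numbering `u_1, …, u_n, v_n, …, v_1` as `0, …, 2n - 1` makes `G_{n,r}` a Hamiltonian cycle plus
`r - 2` chords `u_j v_j` per column, hence 2-connected. Giving the vertices of column `j` the
palette `j(r-1)+1, …, (j+1)(r-1)+1` (consecutive columns share one color, which goes to the
horizontal edges between them) is an interval `(1 + n(r-1))`-coloring in which every vertex has
degree `r`.

Conversely, the colors at a vertex of degree `r` form an interval of `r` integers, so edges with a
common end differ in color by at most `r - 1`. Any two edges of `G_{n,r}` are joined by at most `n`
such steps (walk along the cycle, entering and leaving it through a rung), so the colors `1` and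
`t` of an interval `t`-coloring satisfy `t - 1 ≤ n(r-1)`.
-/

open Relation Fin.NatCast

theorem Fin.val_finRotate {N : ℕ} (i : Fin N) :
    (finRotate N i : ℕ) = if (i : ℕ) + 1 < N then (i : ℕ) + 1 else 0 := by
  obtain ⟨m, rfl⟩ : ∃ m, N = m + 1 := ⟨N - 1, by have := i.pos; omega⟩
  rw [coe_finRotate]
  split_ifs with h₁ h₂ h₂ <;> simp only [Fin.ext_iff, Fin.val_last] at h₁ <;> omega

theorem Fin.reflTransGen_add_natCast {N : ℕ} [NeZero N] {R : Fin N → Fin N → Prop}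
    (x : Fin N) {a b : ℕ} (hab : a ≤ b)
    (h : ∀ k : ℕ, a ≤ k → k < b → R (x + (k : Fin N)) (x + ((k + 1 : ℕ) : Fin N))) :
    ReflTransGen R (x + (a : Fin N)) (x + (b : Fin N)) := by
  induction b, hab using Nat.le_induction with
  | base => rfl
  | succ b hab ih =>
    exact (ih fun k hk hkb => h k hk (by omega)).tail (h b hab (Nat.lt_succ_self b))

theorem SimpleGraph.edist_le_add_of_le {V : Type*} {G : SimpleGraph V} {u v w : V} {a b : ℕ}
    (h₁ : G.edist u v ≤ a) (h₂ : G.edist v w ≤ b) : G.edist u w ≤ (a + b : ℕ) :=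
  G.edist_triangle.trans (by push_cast; exact add_le_add h₁ h₂)

namespace Multigraph

variable {V E : Type*} {G : Multigraph V E}

theorem Adj.symm {a b : V} (h : G.Adj a b) : G.Adj b a :=
  let ⟨e, he⟩ := h; ⟨e, he.trans Sym2.eq_swap⟩

instance : Std.Symm G.Adj := ⟨fun _ _ => Adj.symm⟩

theorem twoConnected_of_adj_finRotate {N : ℕ} [NeZero N] {G : Multigraph (Fin N) E}
    (h : ∀ i, G.Adj i (finRotate N i)) : G.TwoConnected := by
  have step (x : Fin N) (k : ℕ) : G.Adj (x + (k : Fin N)) (x + ((k + 1 : ℕ) : Fin N)) := by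
    simpa [Nat.cast_succ, add_assoc] using h (x + (k : Fin N))
  refine ⟨⟨⟨0⟩, fun u w => ?_⟩, fun q u w hu hw => ?_⟩
  · have from_zero (v : Fin N) : ReflTransGen G.Adj 0 v := by
      simpa using Fin.reflTransGen_add_natCast 0 v.val.zero_le fun k _ _ => step 0 k
    exact (Std.Symm.symm _ _ (from_zero u)).trans (from_zero w)
  -- deleting `q` leaves the Hamiltonian path `q + 1, q + 2, …, q + (N - 1)`
  · let R a b := G.Adj a b ∧ a ≠ q ∧ b ≠ q
    have : Std.Symm R := ⟨fun _ _ ⟨hab, ha, hb⟩ => ⟨hab.symm, hb, ha⟩⟩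
    have ne_q {k : ℕ} (hk : 0 < k) (hkN : k < N) : q + (k : Fin N) ≠ q := by
      rw [Ne, add_eq_left, Fin.natCast_eq_zero]
      exact Nat.not_dvd_of_pos_of_lt hk hkN
    have from_succ (v : Fin N) (hv : v ≠ q) : ReflTransGen R (q + ((1 : ℕ) : Fin N)) v := by
      have hpos : 1 ≤ (v - q).val := Nat.one_le_iff_ne_zero.2 (by simpa [sub_eq_zero] using hv)
      have hlt := (v - q).isLt
      simpa using Fin.reflTransGen_add_natCast (R := R) q hpos fun k hk hkv =>
        ⟨step q k, ne_q (by omega) (by omega), ne_q (by omega) (by omega)⟩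
    exact (Std.Symm.symm _ _ (from_succ u hu)).trans (from_succ w hw)

theorem maxDegree_eq_of_forall_degree_eq [Nonempty V] {d : ℕ} (h : ∀ v, G.degree v = d) :
    G.maxDegree = d := by
  rw [maxDegree, funext h, Set.range_const, csSup_singleton]

variable (G) in
def colorsAt (c : E → ℕ) (v : V) : Set ℕ := c '' {e | G.Inc v e}

variable (G) in
def lineGraph : SimpleGraph E := SimpleGraph.fromRel fun e f => ∃ v, G.Inc v e ∧ G.Inc v f

theorem lineGraph_edist_le_one {v : V} {e f : E} (he : G.Inc v e) (hf : G.Inc v f) :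
    G.lineGraph.edist e f ≤ 1 := by
  rw [SimpleGraph.edist_le_one_iff_adj_or_eq, lineGraph, SimpleGraph.fromRel_adj]
  by_cases hef : e = f
  · exact .inr hef
  · exact .inl ⟨hef, .inl ⟨v, he, hf⟩⟩

namespace IsIntervalColoring

variable {t : ℕ} {c : E → ℕ} {Δ : ℕ}

theorem degree_eq_ncard_colorsAt (hc : G.IsIntervalColoring t c) (v : V) :
    G.degree v = (G.colorsAt c v).ncard := by
  have hinj : Set.InjOn c {e | G.Inc v e} := fun e he f hf hef =>
    by_contra fun hne => hc.1 e f hne ⟨v, he, hf⟩ hef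
  exact hinj.ncard_image.symm

theorem le_add_degree_sub_one [Finite E] (hc : G.IsIntervalColoring t c) {v : V} {e f : E}
    (he : G.Inc v e) (hf : G.Inc v f) : c f ≤ c e + (G.degree v - 1) := by
  have hsub : Set.Icc (c e) (c f) ⊆ G.colorsAt c v := fun k ⟨hek, hkf⟩ =>
    hc.2.2.2 v _ _ k ⟨e, he, rfl⟩ ⟨f, hf, rfl⟩ hek hkf
  have := Set.ncard_le_ncard hsub ((Set.toFinite _).image c)
  rw [Set.ncard_Icc_nat, ← hc.degree_eq_ncard_colorsAt] at this
  omega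

theorem le_add_length_mul [Finite E] (hc : G.IsIntervalColoring t c) (hΔ : ∀ v, G.degree v ≤ Δ)
    {e f : E} (p : G.lineGraph.Walk e f) : c f ≤ c e + p.length * (Δ - 1) := by
  induction p with
  | nil => simp
  | @cons e e' f hadj p ih =>
    obtain ⟨v, hv, hv'⟩ : ∃ v, G.Inc v e ∧ G.Inc v e' := by
      rcases (SimpleGraph.fromRel_adj _ _ _).1 hadj with ⟨-, h | ⟨v, hv', hv⟩⟩
      exacts [h, ⟨v, hv, hv'⟩]
    have := hc.le_add_degree_sub_one hv hv'
    have := hΔ v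
    rw [SimpleGraph.Walk.length_cons, add_one_mul]
    omega

theorem le_one_add_mul_of_edist_le [Finite E] (hc : G.IsIntervalColoring t c)
    (hΔ : ∀ v, G.degree v ≤ Δ) {d : ℕ} (hd : ∀ e f, G.lineGraph.edist e f ≤ d) :
    t ≤ 1 + d * (Δ - 1) := by
  rcases Nat.eq_zero_or_pos t with rfl | ht
  · omega
  obtain ⟨e, he⟩ := hc.2.2.1 1 ⟨le_rfl, ht⟩
  obtain ⟨f, hf⟩ := hc.2.2.1 t ⟨ht, le_rfl⟩
  obtain ⟨p, hp⟩ :=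
    SimpleGraph.exists_walk_of_edist_ne_top ((hd e f).trans_lt (ENat.natCast_lt_top d)).ne
  have hlen : p.length ≤ d := by exact_mod_cast hp ▸ hd e f
  calc t = c f := hf.symm
    _ ≤ 1 + p.length * (Δ - 1) := he ▸ hc.le_add_length_mul hΔ p
    _ ≤ 1 + d * (Δ - 1) := by gcongr

end IsIntervalColoring

end Multigraph

/- `G_{n,r}` lives on `Fin (2n)`: `u_j` is `j - 1` and `v_j` is `2n - j`, so that `0, 1, …, 2n - 1`
runs around the cycle `u_1 ⋯ u_n v_n ⋯ v_1`. Its edges `cycle p`, from `p` to `p + 1 mod 2n`, are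
the horizontal edges and one edge of each of the bundles `u_n v_n` and `v_1 u_1`; the other
`r - 2` edges `u_{i+1} v_{i+1}` are `rung i k`. -/
inductive LadderEdge (n r : ℕ) : Type
  | cycle (p : Fin (2 * n))
  | rung (i : Fin n) (k : Fin (r - 2))
  deriving Fintype

open LadderEdge

def ladder (n r : ℕ) : Multigraph (Fin (2 * n)) (LadderEdge n r) where
  ends
    | cycle p => s(p, finRotate _ p)
    | rung i _ => s(⟨i, by omega⟩, ⟨2 * n - 1 - i, by omega⟩)
  loopless
    | cycle p => by
      have := Fin.val_finRotate p
      simp only [Sym2.mk_isDiag_iff, Fin.ext_iff]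
      split_ifs at this <;> omega
    | rung i _ => by simp [Fin.ext_iff]; omega

namespace Ladder

open Multigraph

variable {n r : ℕ}

/-- `u_{j+1}` and `v_{j+1}` lie in column `j`. -/
def column (v : Fin (2 * n)) : ℕ := min v (2 * n - 1 - v)

theorem column_lt (v : Fin (2 * n)) : column v < n := by
  unfold column; omega

theorem column_mk {j : ℕ} (hj : j < n) : column (⟨j, by omega⟩ : Fin (2 * n)) = j := by
  unfold column; simp only; omega

theorem column_mk_rev {j : ℕ} (hj : j < n) :
    column (⟨2 * n - 1 - j, by omega⟩ : Fin (2 * n)) = j := by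
  unfold column; simp only; omega

theorem inc_cycle_iff {v p : Fin (2 * n)} :
    (ladder n r).Inc v (cycle p) ↔ v = p ∨ v = finRotate _ p := Sym2.mem_iff

theorem inc_rung_iff {v : Fin (2 * n)} {i : Fin n} {k : Fin (r - 2)} :
    (ladder n r).Inc v (rung i k) ↔ column v = i := by
  simp only [Multigraph.Inc, ladder, Sym2.mem_iff, Fin.ext_iff, column]
  omega

theorem cycle_eq_of_inc {v p : Fin (2 * n)} (h : (ladder n r).Inc v (cycle p)) :
    p = v ∨ p = (finRotate _).symm v := by
  rcases inc_cycle_iff.1 h with rfl | rfl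
  exacts [.inl rfl, .inr ((finRotate _).symm_apply_apply p).symm]

def level (p : Fin (2 * n)) : ℕ := if (p : ℕ) < n then p + 1 else 2 * n - 1 - p

/- Column `j` gets the palette `j(r-1)+1, …, (j+1)(r-1)+1`. A cycle edge between columns `j` and
`j + 1` takes their common color `(j+1)(r-1)+1`, the cycle edges `u_n v_n` and `v_1 u_1` the extreme
colors `n(r-1)+1` and `1`, and the rungs of column `j` the colors strictly inside its palette. -/
def coloring (n r : ℕ) : LadderEdge n r → ℕ
  | cycle p => level p * (r - 1) + 1
  | rung i k => i * (r - 1) + 2 + k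

theorem level_eq_column_add (p : Fin (2 * n)) :
    level p = column p + if (p : ℕ) < n then 1 else 0 := by
  unfold level column; split_ifs <;> omega

theorem level_eq_column_finRotate_add (p : Fin (2 * n)) :
    level p = column (finRotate _ p) + if (finRotate _ p : ℕ) < n then 0 else 1 := by
  have := Fin.val_finRotate p
  unfold level column; split_ifs at this ⊢ <;> omega

theorem coloring_cycle_self (v : Fin (2 * n)) :
    coloring n r (cycle v) = (column v + if (v : ℕ) < n then 1 else 0) * (r - 1) + 1 := by
  rw [coloring, level_eq_column_add]

theorem coloring_cycle_symm (v : Fin (2 * n)) :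
    coloring n r (cycle ((finRotate _).symm v)) =
      (column v + if (v : ℕ) < n then 0 else 1) * (r - 1) + 1 := by
  rw [coloring, level_eq_column_finRotate_add, Equiv.apply_symm_apply]

theorem coloring_cycle_self_ne (hr : 2 ≤ r) (v : Fin (2 * n)) :
    coloring n r (cycle v) ≠ coloring n r (cycle ((finRotate _).symm v)) := by
  rw [coloring_cycle_self, coloring_cycle_symm]
  split_ifs <;> simp only [add_zero, add_one_mul] <;> omega

theorem coloring_cycle_of_inc {v p : Fin (2 * n)} (h : (ladder n r).Inc v (cycle p)) :
    coloring n r (cycle p) = column v * (r - 1) + 1 ∨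
      coloring n r (cycle p) = (column v + 1) * (r - 1) + 1 := by
  rcases cycle_eq_of_inc h with rfl | rfl
  · rw [coloring_cycle_self]; split_ifs <;> simp
  · rw [coloring_cycle_symm]; split_ifs <;> simp

theorem coloring_rung_of_inc {v : Fin (2 * n)} {i : Fin n} {k : Fin (r - 2)}
    (h : (ladder n r).Inc v (rung i k)) : coloring n r (rung i k) = column v * (r - 1) + 2 + k := by
  rw [coloring, inc_rung_iff.1 h]

theorem coloring_injOn (hr : 2 ≤ r) (v : Fin (2 * n)) :
    Set.InjOn (coloring n r) {e | (ladder n r).Inc v e} := by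
  intro e he f hf hef
  have hmid {i : Fin n} {k : Fin (r - 2)} (h : (ladder n r).Inc v (rung i k)) :
      column v * (r - 1) + 1 < coloring n r (rung i k) ∧
        coloring n r (rung i k) < (column v + 1) * (r - 1) + 1 := by
    rw [coloring_rung_of_inc h, add_one_mul]; omega
  cases e with
  | cycle p =>
    cases f with
    | cycle q =>
      have hne := coloring_cycle_self_ne hr v
      rcases cycle_eq_of_inc he with rfl | rfl <;> rcases cycle_eq_of_inc hf with rfl | rfl
      exacts [rfl, absurd hef hne, absurd hef.symm hne, rfl]
    | rung j l => have := hmid hf; rcases coloring_cycle_of_inc he with h | h <;> omega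
  | rung i k =>
    cases f with
    | cycle q => have := hmid he; rcases coloring_cycle_of_inc hf with h | h <;> omega
    | rung j l =>
      obtain rfl : i = j := Fin.ext ((inc_rung_iff.1 he).symm.trans (inc_rung_iff.1 hf))
      rw [coloring_rung_of_inc he, coloring_rung_of_inc hf] at hef
      rw [Fin.ext (by omega : (k : ℕ) = l)]

theorem colorsAt_coloring (v : Fin (2 * n)) :
    (ladder n r).colorsAt (coloring n r) v =
      Set.Icc (column v * (r - 1) + 1) ((column v + 1) * (r - 1) + 1) := by
  ext x
  constructor
  · rintro ⟨e, he, rfl⟩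
    cases e with
    | cycle p => rcases coloring_cycle_of_inc he with h | h <;> rw [h] <;> simp [add_one_mul]
    | rung i k => rw [Set.mem_Icc, coloring_rung_of_inc he, add_one_mul]; omega
  · rintro ⟨hlo, hhi⟩
    have hv : (ladder n r).Inc v (cycle v) := inc_cycle_iff.2 (.inl rfl)
    have hv' : (ladder n r).Inc v (cycle ((finRotate _).symm v)) :=
      inc_cycle_iff.2 (.inr ((finRotate _).apply_symm_apply v).symm)
    rcases hlo.eq_or_lt with rfl | hlo
    · by_cases hvn : (v : ℕ) < n
      · exact ⟨_, hv', by rw [coloring_cycle_symm, if_pos hvn, add_zero]⟩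
      · exact ⟨_, hv, by rw [coloring_cycle_self, if_neg hvn, add_zero]⟩
    rcases hhi.eq_or_lt with rfl | hhi
    · by_cases hvn : (v : ℕ) < n
      · exact ⟨_, hv, by rw [coloring_cycle_self, if_pos hvn]⟩
      · exact ⟨_, hv', by rw [coloring_cycle_symm, if_neg hvn]⟩
    rw [add_one_mul] at hhi
    refine ⟨rung ⟨column v, column_lt v⟩ ⟨x - column v * (r - 1) - 2, by omega⟩,
      inc_rung_iff.2 rfl, ?_⟩
    simp only [coloring]
    omega

theorem exists_coloring_eq (hn : 0 < n) {x : ℕ} (hx : 1 ≤ x) (hxn : x ≤ 1 + n * (r - 1)) :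
    ∃ e, coloring n r e = x := by
  have in_column {j : ℕ} (hj : j < n) (hlo : j * (r - 1) + 1 ≤ x)
      (hhi : x ≤ (j + 1) * (r - 1) + 1) : ∃ e, coloring n r e = x := by
    have hmem : x ∈ (ladder n r).colorsAt (coloring n r) ⟨j, by omega⟩ := by
      rw [colorsAt_coloring, column_mk hj]; exact ⟨hlo, hhi⟩
    obtain ⟨e, -, he⟩ := hmem
    exact ⟨e, he⟩
  suffices h : ∀ j < n, x ≤ (j + 1) * (r - 1) + 1 → ∃ e, coloring n r e = x from
    h (n - 1) (by omega) (by rwa [Nat.sub_add_cancel hn, add_comm])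
  intro j
  induction j with
  | zero => exact fun hj hxj => in_column hj (by simpa using hx) hxj
  | succ j ih =>
    intro hj hxj
    by_cases hxj' : x ≤ (j + 1) * (r - 1) + 1
    · exact ih (by omega) hxj'
    · exact in_column hj (by omega) hxj

theorem isIntervalColoring_coloring (hn : 0 < n) (hr : 2 ≤ r) :
    (ladder n r).IsIntervalColoring (1 + n * (r - 1)) (coloring n r) := by
  refine ⟨fun e f hef ⟨v, he, hf⟩ => (coloring_injOn hr v).ne he hf hef, fun e => ?_,
    fun x hx => exists_coloring_eq hn hx.1 hx.2, fun v i j k hi hj hik hkj => ?_⟩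
  · obtain ⟨v, hv⟩ : ∃ v, (ladder n r).Inc v e := ⟨_, Sym2.out_fst_mem ((ladder n r).ends e)⟩
    have hmem : coloring n r e ∈ (ladder n r).colorsAt (coloring n r) v := ⟨e, hv, rfl⟩
    rw [colorsAt_coloring] at hmem
    have : column v + 1 ≤ n := column_lt v
    refine ⟨hmem.1.trans' (Nat.le_add_left 1 _), hmem.2.trans ?_⟩
    rw [add_comm 1]
    gcongr
  · change i ∈ (ladder n r).colorsAt (coloring n r) v at hi
    change j ∈ (ladder n r).colorsAt (coloring n r) v at hj
    change k ∈ (ladder n r).colorsAt (coloring n r) v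
    rw [colorsAt_coloring] at hi hj ⊢
    exact ⟨hi.1.trans hik, hkj.trans hj.2⟩

theorem degree_eq (hn : 0 < n) (hr : 2 ≤ r) (v : Fin (2 * n)) : (ladder n r).degree v = r := by
  rw [(isIntervalColoring_coloring hn hr).degree_eq_ncard_colorsAt, colorsAt_coloring,
    Set.ncard_Icc_nat, add_one_mul]
  omega

theorem edist_cycle_finRotate_le_one (p : Fin (2 * n)) :
    (ladder n r).lineGraph.edist (cycle p) (cycle (finRotate _ p)) ≤ 1 :=
  lineGraph_edist_le_one (inc_cycle_iff.2 (.inr rfl)) (inc_cycle_iff.2 (.inl rfl))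

theorem edist_cycle_le {a b : Fin (2 * n)} (hab : a ≤ b) :
    (ladder n r).lineGraph.edist (cycle a) (cycle b) ≤ (b - a : ℕ) := by
  obtain ⟨k, hk⟩ : ∃ k, (b : ℕ) = a + k := ⟨b - a, by rw [Fin.le_def] at hab; omega⟩
  rw [hk, Nat.add_sub_cancel_left]
  induction k generalizing b with
  | zero => rw [Fin.ext hk, SimpleGraph.edist_self]; rfl
  | succ k ih =>
    let b' : Fin (2 * n) := ⟨a + k, by omega⟩
    have hb : finRotate _ b' = b := Fin.ext <| by
      rw [Fin.val_finRotate, if_pos (by simp only [b']; omega)]; simp only [b']; omega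
    exact hb ▸ SimpleGraph.edist_le_add_of_le (ih (by simp [Fin.le_def, b']) rfl)
      (edist_cycle_finRotate_le_one b')

theorem edist_cycle_le_dist (a b : Fin (2 * n)) :
    (ladder n r).lineGraph.edist (cycle a) (cycle b) ≤ ((b - a) + (a - b) : ℕ) := by
  rcases le_total a b with hab | hab
  · exact (edist_cycle_le hab).trans (Nat.cast_le.2 (Nat.le_add_right _ _))
  · rw [SimpleGraph.edist_comm]
    exact (edist_cycle_le hab).trans (Nat.cast_le.2 (Nat.le_add_left _ _))

theorem edist_rung_le_one_add {i : Fin n} {k : Fin (r - 2)} {v p : Fin (2 * n)}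
    (hv : column v = i) {m : ℕ} (h : (ladder n r).lineGraph.edist (cycle v) (cycle p) ≤ m) :
    (ladder n r).lineGraph.edist (rung i k) (cycle p) ≤ (1 + m : ℕ) :=
  SimpleGraph.edist_le_add_of_le
    (lineGraph_edist_le_one (inc_rung_iff.2 hv) (inc_cycle_iff.2 (.inl rfl))) h

theorem edist_cycle_cycle_le (a b : Fin (2 * n)) :
    (ladder n r).lineGraph.edist (cycle a) (cycle b) ≤ n := by
  wlog hab : a ≤ b generalizing a b
  · rw [SimpleGraph.edist_comm]; exact this b a (le_of_not_ge hab)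
  by_cases hba : (b : ℕ) - a ≤ n
  · exact (edist_cycle_le hab).trans (Nat.cast_le.2 hba)
  -- otherwise go the other way around, through the edge `2n - 1` closing the cycle
  let last : Fin (2 * n) := ⟨2 * n - 1, by omega⟩
  have hlast : finRotate _ last = ⟨0, by omega⟩ :=
    Fin.ext <| by rw [Fin.val_finRotate, if_neg (by simp only [last]; omega)]
  have h₁ := edist_cycle_le (r := r) (show b ≤ last from Fin.le_def.2 (by simp only [last]; omega))
  have h₂ := hlast ▸ edist_cycle_finRotate_le_one (r := r) last
  have h₃ := edist_cycle_le (r := r) (show ⟨0, by omega⟩ ≤ a from Fin.le_def.2 (Nat.zero_le _))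
  rw [SimpleGraph.edist_comm]
  refine (SimpleGraph.edist_le_add_of_le (SimpleGraph.edist_le_add_of_le h₁ h₂) h₃).trans
    (Nat.cast_le.2 ?_)
  simp only [last]
  omega

theorem edist_rung_cycle_le (i : Fin n) (k : Fin (r - 2)) (p : Fin (2 * n)) :
    (ladder n r).lineGraph.edist (rung i k) (cycle p) ≤ n := by
  -- the rung meets the cycle edges leaving `i` and `2n - 1 - i`, and one of them is close to `p`
  by_cases hpx : ((p : ℕ) - i) + (i - p) < n
  · refine (edist_rung_le_one_add (column_mk i.isLt) (edist_cycle_le_dist _ p)).trans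
      (Nat.cast_le.2 ?_)
    simp only; omega
  · refine (edist_rung_le_one_add (column_mk_rev i.isLt) (edist_cycle_le_dist _ p)).trans
      (Nat.cast_le.2 ?_)
    simp only; omega

theorem edist_rung_rung_le (i j : Fin n) (k l : Fin (r - 2)) :
    (ladder n r).lineGraph.edist (rung i k) (rung j l) ≤ n := by
  wlog hij : i ≤ j generalizing i j k l
  · rw [SimpleGraph.edist_comm]; exact this j i l k (le_of_not_ge hij)
  rcases (Fin.le_def.1 hij).eq_or_lt with hij | hij
  · have hx := column_mk (n := n) i.isLt
    exact (lineGraph_edist_le_one (inc_rung_iff.2 hx) (inc_rung_iff.2 (hx.trans hij))).trans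
      (Nat.one_le_cast.2 (by omega))
  -- along the bottom row, from the edge leaving `u_{i+1}` to the edge entering `u_{j+1}`
  let x : Fin (2 * n) := ⟨i, by omega⟩
  let y : Fin (2 * n) := ⟨j - 1, by omega⟩
  have hy : finRotate _ y = ⟨j, by omega⟩ :=
    Fin.ext <| by rw [Fin.val_finRotate, if_pos (by simp only [y]; omega)]; simp only [y]; omega
  have h₁ := edist_rung_le_one_add (k := k) (column_mk i.isLt)
    (edist_cycle_le (r := r) (show x ≤ y from Fin.le_def.2 (by simp only [x, y]; omega)))
  have h₂ : (ladder n r).lineGraph.edist (cycle y) (rung j l) ≤ 1 :=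
    lineGraph_edist_le_one (inc_cycle_iff.2 (.inr hy.symm)) (inc_rung_iff.2 (column_mk j.isLt))
  refine (SimpleGraph.edist_le_add_of_le h₁ h₂).trans (Nat.cast_le.2 ?_)
  simp only [y]
  omega

theorem edist_le (e f : LadderEdge n r) : (ladder n r).lineGraph.edist e f ≤ n := by
  cases e with
  | cycle p =>
    cases f with
    | cycle q => exact edist_cycle_cycle_le p q
    | rung j l => rw [SimpleGraph.edist_comm]; exact edist_rung_cycle_le j l p
  | rung i k =>
    cases f with
    | cycle q => exact edist_rung_cycle_le i k q
    | rung j l => exact edist_rung_rung_le i j k l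

end Ladder

/-- For any integers `n, r ≥ 2` there is a 2-connected multigraph `G` with `2n`
vertices and maximum degree `r` which admits an interval `(1 + n(r−1))`-coloring,
and such that every interval `t`-coloring of `G` has `t ≤ 1 + n(r−1)`, i.e.
`W(G) = 1 + n(r−1)`. -/
theorem stmt10 (n r : ℕ) (hn : 2 ≤ n) (hr : 2 ≤ r) :
    ∃ (E : Type) (_ : Fintype E) (G : Multigraph (Fin (2 * n)) E),
      G.TwoConnected ∧ G.maxDegree = r ∧
      (∃ c : E → ℕ, G.IsIntervalColoring (1 + n * (r - 1)) c) ∧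
      (∀ (t : ℕ) (c : E → ℕ), G.IsIntervalColoring t c → t ≤ 1 + n * (r - 1)) := by
  have hn₀ : 0 < n := by omega
  have : NeZero (2 * n) := ⟨by omega⟩
  refine ⟨LadderEdge n r, inferInstance, ladder n r, ?_, ?_,
    ⟨_, Ladder.isIntervalColoring_coloring hn₀ hr⟩, fun t c hc => ?_⟩
  · exact Multigraph.twoConnected_of_adj_finRotate fun p => ⟨.cycle p, rfl⟩
  · exact Multigraph.maxDegree_eq_of_forall_degree_eq (Ladder.degree_eq hn₀ hr)
  · exact hc.le_one_add_mul_of_edist_le (fun v => (Ladder.degree_eq hn₀ hr v).le) Ladder.edist_le
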